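/- arXiv:1601.06375 — 2 statements merged into one kernel-verified Lean document; each statement's English description precedes it below -/
import Mathlib

section
/- Let r be an odd integer with 1 ≤ r < m, let γ be a fixed nonsquare in F_q, let μ ∈ {1, γ}, and let Q : F_q^m → F_q be the Type II quadratic form Q(x) = B_{r-1}(x) + μ·x_r². Let b ∈ F_q^m be such that b_i ≠ 0 for some index i with r < i ≤ m. Then for all a, v ∈ F_q, N(a,v) = q^{m-2} + η(μa)·q^{m-(r+3)/2}. -/
open Finset

/-- `Bform j x = x₁x₂ + x₃x₄ + ⋯ + x_{2j-1}x_{2j}` (1-based indexing), i.e. the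
quadratic form `B_{2j}` in `m` variables. -/
def Bform {F : Type*} [CommRing F] {m : ℕ} (j : ℕ) (x : Fin m → F) : F :=
  ∑ i ∈ Finset.range j,
    if h : 2 * i + 1 < m then x ⟨2 * i, by omega⟩ * x ⟨2 * i + 1, h⟩ else 0

/-- The linear function `L_b(x) = b₁x₁ + ⋯ + b_m x_m`. -/
def Lfun {F : Type*} [CommRing F] {m : ℕ} (b x : Fin m → F) : F :=
  ∑ i, b i * x i

section aux
set_option linter.unusedSectionVars false
variable {F : Type*} [Field F] [Fintype F] [DecidableEq F]

lemma hyp_count (d : F) :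
    ∑ u : F, ∑ w : F, (if u * w = d then (1:ℤ) else 0)
      = ((Fintype.card F : ℤ) - 1) + (if d = 0 then (Fintype.card F : ℤ) else 0) := by
  rw [← Finset.sum_erase_add _ _ (Finset.mem_univ (0:F))]
  have h1 : ∀ u ∈ Finset.univ.erase (0:F),
      (∑ w : F, (if u * w = d then (1:ℤ) else 0)) = 1 := by
    intro u hu
    have hu0 : u ≠ 0 := Finset.ne_of_mem_erase hu
    have hcond : ∀ w : F, (u * w = d) ↔ (w = u⁻¹ * d) := by
      intro w
      constructor
      · intro h; field_simp [← h]; linear_combination h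
      · intro h; rw [h]; field_simp
    calc (∑ w : F, (if u * w = d then (1:ℤ) else 0))
        = ∑ w : F, (if w = u⁻¹ * d then (1:ℤ) else 0) := by
          apply Finset.sum_congr rfl; intro w _
          simp only [hcond]
      _ = 1 := by rw [Fintype.sum_ite_eq' (u⁻¹ * d) (fun _ => (1:ℤ))]
  rw [Finset.sum_congr rfl h1, Finset.sum_const, Finset.card_erase_of_mem (Finset.mem_univ _),
    Finset.card_univ]
  have h2 : (∑ w : F, (if (0:F) * w = d then (1:ℤ) else 0))
      = if d = 0 then (Fintype.card F : ℤ) else 0 := by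
    by_cases hd : d = 0 <;> simp [hd, Finset.card_univ, eq_comm]
  rw [h2]
  rw [nsmul_eq_mul, mul_one,
    Nat.cast_sub (by exact_mod_cast Fintype.card_pos : 1 ≤ Fintype.card F), Nat.cast_one]

lemma Lfun_update {n : ℕ} (b z : Fin n → F) (i₀ : Fin n) (c : F) :
    Lfun b (Function.update z i₀ c) = Lfun b z - b i₀ * z i₀ + b i₀ * c := by
  have key : (fun i => b i * (Function.update z i₀ c) i)
      = Function.update (fun i => b i * z i) i₀ (b i₀ * c) := by
    funext i
    by_cases h : i = i₀
    · subst h; simp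
    · simp [Function.update_of_ne h]
  rw [Lfun, key, Finset.sum_update_of_mem (Finset.mem_univ i₀)]
  rw [Lfun, ← Finset.add_sum_erase _ _ (Finset.mem_univ i₀), Finset.sdiff_singleton_eq_erase]
  ring

lemma lin_count {n : ℕ} (b : Fin (n+1) → F) (i₀ : Fin (n+1)) (hb : b i₀ ≠ 0) (w : F) :
    ∑ z : Fin (n+1) → F, (if Lfun b z = w then (1:ℤ) else 0)
      = (Fintype.card F : ℤ) ^ n := by
  have hcardB : (Finset.univ.filter (fun z : Fin (n+1) → F => z i₀ = 0)).card
      = Fintype.card F ^ n := by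
    have hset : (Finset.univ.filter (fun z : Fin (n+1) → F => z i₀ = 0))
        = Fintype.piFinset (fun i => if i = i₀ then ({0} : Finset F) else Finset.univ) := by
      ext z
      simp only [Finset.mem_filter, Finset.mem_univ, true_and, Fintype.mem_piFinset]
      constructor
      · intro h i
        by_cases hi : i = i₀
        · subst hi; simp [h]
        · simp [hi]
      · intro h
        have := h i₀
        simpa using this
    rw [hset, Fintype.card_piFinset]
    rw [← Finset.prod_erase_mul _ _ (Finset.mem_univ i₀)]
    simp only [if_pos rfl, Finset.card_singleton, mul_one]
    have : ∀ i ∈ Finset.univ.erase i₀,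
        (if i = i₀ then ({0} : Finset F) else Finset.univ).card = Fintype.card F := by
      intro i hi
      rw [if_neg (Finset.ne_of_mem_erase hi), Finset.card_univ]
    rw [Finset.prod_congr rfl this, Finset.prod_const,
      Finset.card_erase_of_mem (Finset.mem_univ _), Finset.card_univ, Fintype.card_fin]
    simp
  have hcardA : (Finset.univ.filter (fun z : Fin (n+1) → F => Lfun b z = w)).card
      = (Finset.univ.filter (fun z : Fin (n+1) → F => z i₀ = 0)).card := by
    apply Finset.card_bij' (fun z _ => Function.update z i₀ 0)
      (fun y _ => Function.update y i₀ ((w - Lfun b (Function.update y i₀ 0)) / b i₀))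
    · intro z hz; simp
    · intro y hy
      simp only [Finset.mem_filter, Finset.mem_univ, true_and] at hy ⊢
      have hy0 : Function.update y i₀ (0:F) = y := by
        funext i; by_cases h : i = i₀
        · subst h; simp [hy]
        · simp [Function.update_of_ne h]
      rw [Lfun_update, hy0, hy, mul_zero, sub_zero]
      field_simp
      ring
    · intro z hz
      simp only [Finset.mem_filter, Finset.mem_univ, true_and] at hz
      funext i
      by_cases h : i = i₀
      · subst h
        simp only [Function.update_self]
        rw [Lfun_update, Lfun_update, hz]
        field_simp
        rw [Function.update_self]; ring
      · simp [Function.update_of_ne h]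
    · intro y hy
      simp only [Finset.mem_filter, Finset.mem_univ, true_and] at hy
      funext i
      by_cases h : i = i₀
      · subst h; simp [hy]
      · simp [Function.update_of_ne h]
  have hsb : (∑ z : Fin (n+1) → F, (if Lfun b z = w then (1:ℤ) else 0))
      = ((Finset.univ.filter (fun z : Fin (n+1) → F => Lfun b z = w)).card : ℤ) := by
    rw [Finset.sum_boole]
  rw [hsb, hcardA, hcardB]
  push_cast
  ring

end aux

section bform
variable {F : Type*} [CommRing F]

lemma Bform_zero {m : ℕ} (x : Fin m → F) : Bform 0 x = 0 := by simp [Bform]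

lemma cons_cons_apply {n : ℕ} (c0 c1 : F) (y : Fin n → F) (k : ℕ) (h : k + 2 < n + 2) :
    (Fin.cons c0 (Fin.cons c1 y) : Fin (n+2) → F) ⟨k+2, h⟩ = y ⟨k, by omega⟩ := by
  have e : (⟨k+2, h⟩ : Fin (n+2)) = Fin.succ (Fin.succ ⟨k, by omega⟩) := rfl
  rw [e, Fin.cons_succ, Fin.cons_succ]

lemma Bform_cons {n : ℕ} (j : ℕ) (c0 c1 : F) (y : Fin n → F) :
    Bform (j+1) (Fin.cons c0 (Fin.cons c1 y) : Fin (n+2) → F) = c0 * c1 + Bform j y := by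
  rw [Bform, Finset.sum_range_succ']
  rw [add_comm (Finset.sum _ _)]
  refine congrArg₂ (· + ·) ?_ ?_
  · rw [dif_pos (by omega : 2*0+1 < n+2)]
    show (Fin.cons c0 (Fin.cons c1 y) : Fin (n+2) → F) 0
        * (Fin.cons c0 (Fin.cons c1 y) : Fin (n+2) → F) (Fin.succ 0) = c0 * c1
    rw [Fin.cons_zero, Fin.cons_succ, Fin.cons_zero]
  · rw [Bform]
    apply Finset.sum_congr rfl
    intro i _
    by_cases h : 2*i+1 < n
    · rw [dif_pos (by omega : 2*(i+1)+1 < n+2), dif_pos h]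
      show (Fin.cons c0 (Fin.cons c1 y) : Fin (n+2) → F) ⟨2*i+2, by omega⟩
          * (Fin.cons c0 (Fin.cons c1 y) : Fin (n+2) → F) ⟨2*i+1+2, by omega⟩
          = y ⟨2*i, by omega⟩ * y ⟨2*i+1, h⟩
      rw [cons_cons_apply, cons_cons_apply]
    · rw [dif_neg (by omega : ¬ (2*(i+1)+1 < n+2)), dif_neg h]

lemma cons_cons_last' {j : ℕ} (c0 c1 : F) (y : Fin (2*j+1) → F) :
    (Fin.cons c0 (Fin.cons c1 y) : Fin (2*j+1+2) → F) (Fin.last (2*j+1+1)) = y (Fin.last (2*j)) := by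
  have h : Fin.last (2*j+1+1) = Fin.succ (Fin.succ (Fin.last (2*j))) := rfl
  rw [h, Fin.cons_succ, Fin.cons_succ]

lemma append_apply_left {r s : ℕ} (y : Fin r → F) (z : Fin s → F) (k : ℕ)
    (hk : k < r) (hk' : k < r + s) :
    Fin.append y z ⟨k, hk'⟩ = y ⟨k, hk⟩ := by
  have h : (⟨k, hk'⟩ : Fin (r+s)) = Fin.castAdd s ⟨k, hk⟩ := rfl
  rw [h, Fin.append_left]

lemma Bform_append {r s : ℕ} (j : ℕ) (hj : 2*j ≤ r) (y : Fin r → F) (z : Fin s → F) :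
    Bform j (Fin.append y z) = Bform j y := by
  rw [Bform, Bform]
  apply Finset.sum_congr rfl
  intro i hi
  rw [Finset.mem_range] at hi
  have h1 : 2*i+1 < r := by omega
  rw [dif_pos (by omega : 2*i+1 < r+s), dif_pos h1,
    append_apply_left _ _ _ (by omega : 2*i < r), append_apply_left _ _ _ h1]

lemma Lfun_append {r s : ℕ} (b : Fin (r+s) → F) (y : Fin r → F) (z : Fin s → F) :
    Lfun b (Fin.append y z)
      = Lfun (fun i => b (Fin.castAdd s i)) y + Lfun (fun i => b (Fin.natAdd r i)) z := by
  rw [Lfun, Fin.sum_univ_add]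
  simp [Lfun, Fin.append_left, Fin.append_right]

end bform

section core
set_option linter.unusedSectionVars false
variable {F : Type*} [Field F] [Fintype F] [DecidableEq F]

lemma core_count (hF : ringChar F ≠ 2) (μ : F) (hμ : μ ≠ 0) (j : ℕ) :
    ∀ a : F,
    (∑ y : Fin (2*j+1) → F, if Bform j y + μ * y (Fin.last (2*j)) ^ 2 = a then (1:ℤ) else 0)
      = (Fintype.card F : ℤ) ^ (2*j)
        + quadraticChar F (μ * a) * (Fintype.card F : ℤ) ^ j := by
  induction j with
  | zero =>
    intro a
    rw [← Equiv.sum_comp (Equiv.funUnique (Fin 1) F).symm]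
    have hcond : ∀ t : F,
        ((Bform 0 ((Equiv.funUnique (Fin 1) F).symm t)
          + μ * ((Equiv.funUnique (Fin 1) F).symm t) (Fin.last (2*0)) ^ 2 = a)
          ↔ (t ^ 2 = μ⁻¹ * a)) := by
      intro t
      rw [Bform_zero, zero_add]
      show μ * t ^ 2 = a ↔ _
      constructor
      · intro h; rw [← h]; field_simp
      · intro h; rw [h]; field_simp
    simp only [hcond]
    rw [Finset.sum_boole]
    have hsq := quadraticChar_card_sqrts hF (μ⁻¹ * a)
    rw [Set.toFinset_setOf] at hsq
    rw [hsq]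
    have hμa : μ * a = μ^2 * (μ⁻¹ * a) := by field_simp
    have hchi : quadraticChar F (μ * a) = quadraticChar F (μ⁻¹ * a) := by
      rw [hμa, map_mul, quadraticChar_sq_one' hμ, one_mul]
    rw [hchi]
    norm_num
    ring
  | succ j ih =>
    intro a
    let e2 : F × (Fin (2*j+1) → F) ≃ (Fin (2*j+1+1) → F) :=
      Fin.consEquiv (fun _ : Fin (2*j+1+1) => F)
    let e1 : F × (Fin (2*j+1+1) → F) ≃ (Fin (2*j+1+2) → F) :=
      Fin.consEquiv (fun _ : Fin (2*j+1+2) => F)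
    let e : (Fin (2*j+1) → F) × F × F ≃ (Fin (2*(j+1)+1) → F) :=
      (Equiv.prodComm _ _).trans ((Equiv.prodAssoc F F _).trans
        (((Equiv.refl F).prodCongr e2).trans e1))
    calc (∑ y : Fin (2*(j+1)+1) → F,
            if Bform (j+1) y + μ * y (Fin.last (2*(j+1))) ^ 2 = a then (1:ℤ) else 0)
        = ∑ p : (Fin (2*j+1) → F) × F × F,
            (if p.2.1 * p.2.2
                = a - (Bform j p.1 + μ * p.1 (Fin.last (2*j)) ^ 2) then (1:ℤ) else 0) := by
          refine (Fintype.sum_equiv e _ _ fun p => ?_).symm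
          refine if_congr ?_ rfl rfl
          obtain ⟨y, c0, c1⟩ := p
          show (c0 * c1 = a - (Bform j y + μ * y (Fin.last (2*j)) ^ 2))
            ↔ (Bform (j+1) (Fin.cons c0 (Fin.cons c1 y) : Fin (2*j+1+2) → F)
              + μ * (Fin.cons c0 (Fin.cons c1 y) : Fin (2*j+1+2) → F) (Fin.last (2*j+1+1)) ^ 2 = a)
          rw [Bform_cons, cons_cons_last']
          constructor <;> intro h <;> linear_combination h
      _ = ∑ y : Fin (2*j+1) → F, ∑ c0 : F, ∑ c1 : F,
            (if c0 * c1 = a - (Bform j y + μ * y (Fin.last (2*j)) ^ 2) then (1:ℤ) else 0) := by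
          rw [Fintype.sum_prod_type]
          apply Finset.sum_congr rfl
          intro y _
          rw [Fintype.sum_prod_type]
      _ = ∑ y : Fin (2*j+1) → F,
            (((Fintype.card F : ℤ) - 1)
              + (if a - (Bform j y + μ * y (Fin.last (2*j)) ^ 2) = 0
                  then (Fintype.card F : ℤ) else 0)) := by
          apply Finset.sum_congr rfl
          intro y _
          exact hyp_count _
      _ = ∑ y : Fin (2*j+1) → F,
            (((Fintype.card F : ℤ) - 1)
              + (Fintype.card F : ℤ)
                * (if Bform j y + μ * y (Fin.last (2*j)) ^ 2 = a then (1:ℤ) else 0)) := by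
          apply Finset.sum_congr rfl
          intro y _
          congr 1
          by_cases h : Bform j y + μ * y (Fin.last (2*j)) ^ 2 = a
          · rw [if_pos h, if_pos (by rw [h, sub_self]), mul_one]
          · rw [if_neg h, if_neg (fun hc => h (sub_eq_zero.mp hc).symm), mul_zero]
      _ = (Fintype.card F : ℤ) ^ (2*j+1) * ((Fintype.card F : ℤ) - 1)
            + (Fintype.card F : ℤ)
              * ((Fintype.card F : ℤ) ^ (2*j)
                + quadraticChar F (μ * a) * (Fintype.card F : ℤ) ^ j) := by
          rw [Finset.sum_add_distrib, Finset.sum_const, ← Finset.mul_sum, ih a,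
            Finset.card_univ]
          congr 1
          rw [Fintype.card_fun, Fintype.card_fin, nsmul_eq_mul]
          push_cast
          ring
      _ = (Fintype.card F : ℤ) ^ (2*(j+1))
            + quadraticChar F (μ * a) * (Fintype.card F : ℤ) ^ (j+1) := by
          ring

end core


set_option maxHeartbeats 2000000 in
theorem statement8 (p e q m r : ℕ) (F : Type*) [Field F] [Fintype F] [DecidableEq F]
    (hp : p.Prime) (hpodd : Odd p) (he : 0 < e) (hq : q = p ^ e)
    (hcard : Fintype.card F = q)
    (hrodd : Odd r) (hr1 : 1 ≤ r) (hrm : r < m)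
    (γ μ : F) (hγ : ¬ IsSquare γ) (hμ : μ = 1 ∨ μ = γ)
    (b : Fin m → F) (hb'' : ∃ i : Fin m, r ≤ (i : ℕ) ∧ b i ≠ 0)
    (a v : F) :
    ((univ.filter (fun x : Fin m → F =>
        Bform ((r - 1) / 2) x + μ * x ⟨r - 1, by omega⟩ ^ 2 = a
          ∧ Lfun b x = v)).card : ℤ)
      = (q : ℤ) ^ (m - 2) + quadraticChar F (μ * a) * (q : ℤ) ^ (m - (r + 3) / 2) := by
  -- ringChar F ≠ 2
  have hchar : ringChar F ≠ 2 := by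
    obtain ⟨n', hprime, hcard'⟩ := FiniteField.card F (ringChar F)
    have hdvd : ringChar F ∣ p ^ e := by
      rw [← hq, ← hcard, hcard']
      exact dvd_pow_self _ (by positivity)
    have hrp : ringChar F = p :=
      (Nat.prime_dvd_prime_iff_eq hprime hp).mp (hprime.dvd_of_dvd_pow hdvd)
    rw [hrp]
    rintro rfl
    exact (Nat.not_odd_iff_even.mpr (by decide)) hpodd
  have hμ0 : μ ≠ 0 := by
    rcases hμ with h | h
    · rw [h]; exact one_ne_zero
    · rw [h]; intro h0; exact hγ (h0 ▸ ⟨0, by ring⟩)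
  obtain ⟨j, rfl⟩ : ∃ j, r = 2*j+1 := by
    obtain ⟨k, hk⟩ := hrodd; exact ⟨k, by omega⟩
  obtain ⟨s, rfl⟩ : ∃ s, m = 2*j+1 + (s+1) := ⟨m - (2*j+1) - 1, by omega⟩
  obtain ⟨i, hir, hbi⟩ := hb''
  have hiv : (i : ℕ) < 2*j+1 + (s+1) := i.isLt
  set i₀ : Fin (s+1) := ⟨(i : ℕ) - (2*j+1), by omega⟩ with hi₀
  have hnat : Fin.natAdd (2*j+1) i₀ = i := by
    apply Fin.ext
    simp only [Fin.coe_natAdd, hi₀]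
    omega
  have hb2 : (fun i' => b (Fin.natAdd (2*j+1) i')) i₀ ≠ 0 := by
    simpa only [hnat] using hbi
  have h1 : (2*j+1-1)/2 = j := by omega
  have h2 : 2*j+1+(s+1)-2 = 2*j + s := by omega
  have h3 : 2*j+1+(s+1) - (2*j+1+3)/2 = j + s := by omega
  simp only [h1, h2, h3]
  rw [← Finset.sum_boole]
  calc (∑ x : Fin (2*j+1+(s+1)) → F,
          if (Bform j x + μ * x ⟨2*j+1-1, by omega⟩ ^ 2 = a ∧ Lfun b x = v)
          then (1:ℤ) else 0)
      = ∑ yz : (Fin (2*j+1) → F) × (Fin (s+1) → F),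
          (if ((Bform j yz.1 + μ * yz.1 (Fin.last (2*j)) ^ 2 = a)
            ∧ (Lfun (fun i' => b (Fin.natAdd (2*j+1) i')) yz.2
                = v - Lfun (fun i' => b (Fin.castAdd (s+1) i')) yz.1))
          then (1:ℤ) else 0) := by
        refine (Fintype.sum_equiv (Fin.appendEquiv (2*j+1) (s+1)) _ _ fun yz => ?_).symm
        refine if_congr ?_ rfl rfl
        have happ : (Fin.appendEquiv (2*j+1) (s+1)) yz = Fin.append yz.1 yz.2 := rfl
        rw [happ, Bform_append j (by omega) yz.1 yz.2, Lfun_append b yz.1 yz.2,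
          append_apply_left yz.1 yz.2 (2*j+1-1) (by omega) (by omega)]
        have hidx : (⟨2*j+1-1, by omega⟩ : Fin (2*j+1)) = Fin.last (2*j) := rfl
        rw [hidx]
        exact and_congr Iff.rfl (by rw [eq_sub_iff_add_eq, add_comm])
    _ = ∑ y : Fin (2*j+1) → F,
          (if Bform j y + μ * y (Fin.last (2*j)) ^ 2 = a then (1:ℤ) else 0)
            * (Fintype.card F : ℤ) ^ s := by
        rw [Fintype.sum_prod_type]
        apply Finset.sum_congr rfl
        intro y _
        have hsplit : ∀ z : Fin (s+1) → F,
            (if ((Bform j y + μ * y (Fin.last (2*j)) ^ 2 = a)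
              ∧ (Lfun (fun i' => b (Fin.natAdd (2*j+1) i')) z
                  = v - Lfun (fun i' => b (Fin.castAdd (s+1) i')) y))
            then (1:ℤ) else 0)
            = (if Bform j y + μ * y (Fin.last (2*j)) ^ 2 = a then (1:ℤ) else 0)
              * (if Lfun (fun i' => b (Fin.natAdd (2*j+1) i')) z
                  = v - Lfun (fun i' => b (Fin.castAdd (s+1) i')) y then (1:ℤ) else 0) := by
          intro z
          by_cases hA : Bform j y + μ * y (Fin.last (2*j)) ^ 2 = a <;>
            by_cases hB : Lfun (fun i' => b (Fin.natAdd (2*j+1) i')) z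
                  = v - Lfun (fun i' => b (Fin.castAdd (s+1) i')) y <;>
            simp [hA, hB]
        rw [Finset.sum_congr rfl (fun z _ => hsplit z), ← Finset.mul_sum,
          lin_count (fun i' => b (Fin.natAdd (2*j+1) i')) i₀ hb2]
    _ = (q:ℤ) ^ (2*j + s) + quadraticChar F (μ * a) * (q:ℤ) ^ (j + s) := by
        rw [← Finset.sum_mul, core_count hchar μ hμ0 j a, hcard]
        ring
end

section
/- Let r be an odd integer with 5 ≤ r ≤ m, let γ be a fixed nonsquare in F_q, let μ ∈ {1, γ}, let Q : F_q^m → F_q be the Type II quadratic form Q(x) = B_{r-1}(x) + μ·x_r², and let a ∈ F_q be nonzero. Then all nonzero codewords of the code C are minimal: for any nonzero b, b' ∈ F_q^m, the set {x ∈ F_q^m : Q(x) = a and L_{b'}(x) ≠ 0} is not a proper subset of the set {x ∈ F_q^m : Q(x) = a and L_b(x) ≠ 0}. -/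
open Finset

section Aux

variable {F : Type*} [Field F] {m : ℕ}

/-- the polar form of `Bform j + μ x_{2j}^2`. -/
def polB (j : ℕ) (μ : F) (x y : Fin m → F) : F :=
  (∑ i ∈ Finset.range j,
    if h : 2 * i + 1 < m then
      x ⟨2 * i, by omega⟩ * y ⟨2 * i + 1, h⟩ + x ⟨2 * i + 1, h⟩ * y ⟨2 * i, by omega⟩
    else 0)
  + (if h : 2 * j < m then 2 * μ * x ⟨2 * j, h⟩ * y ⟨2 * j, h⟩ else 0)

/-- the quadratic form. -/
def Qf (j : ℕ) (μ : F) (x : Fin m → F) : F :=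
  Bform j x + μ * (if h : 2 * j < m then x ⟨2 * j, h⟩ else 0) ^ 2

def det3 (a11 a12 a13 a21 a22 a23 a31 a32 a33 : F) : F :=
  a11 * (a22 * a33 - a23 * a32) - a12 * (a21 * a33 - a23 * a31)
    + a13 * (a21 * a32 - a22 * a31)

lemma polB_symm (j : ℕ) (μ : F) (x y : Fin m → F) :
    polB j μ x y = polB j μ y x := by
  unfold polB
  congr 1
  · exact Finset.sum_congr rfl fun i hi => by split_ifs with h <;> ring
  · split_ifs with h <;> ring

lemma polB_add_right (j : ℕ) (μ : F) (x y z : Fin m → F) :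
    polB j μ x (y + z) = polB j μ x y + polB j μ x z := by
  unfold polB
  have h1 : (∑ i ∈ Finset.range j,
      if h : 2 * i + 1 < m then
        x ⟨2 * i, by omega⟩ * (y + z) ⟨2 * i + 1, h⟩ + x ⟨2 * i + 1, h⟩ * (y + z) ⟨2 * i, by omega⟩
      else 0) =
      (∑ i ∈ Finset.range j,
      ((if h : 2 * i + 1 < m then
        x ⟨2 * i, by omega⟩ * y ⟨2 * i + 1, h⟩ + x ⟨2 * i + 1, h⟩ * y ⟨2 * i, by omega⟩
      else 0) +
      (if h : 2 * i + 1 < m then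
        x ⟨2 * i, by omega⟩ * z ⟨2 * i + 1, h⟩ + x ⟨2 * i + 1, h⟩ * z ⟨2 * i, by omega⟩
      else 0))) := by
    refine Finset.sum_congr rfl fun i hi => ?_
    split_ifs with h
    · simp only [Pi.add_apply]; ring
    · ring
  rw [h1, Finset.sum_add_distrib]
  split_ifs with h
  · simp only [Pi.add_apply]; ring
  · ring

lemma polB_smul_right (j : ℕ) (μ : F) (c : F) (x y : Fin m → F) :
    polB j μ x (c • y) = c * polB j μ x y := by
  unfold polB
  rw [mul_add, Finset.mul_sum]
  congr 1
  · refine Finset.sum_congr rfl fun i hi => ?_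
    split_ifs with h
    · simp only [Pi.smul_apply, smul_eq_mul]; ring
    · ring
  · split_ifs with h
    · simp only [Pi.smul_apply, smul_eq_mul]; ring
    · ring

lemma polB_add_left (j : ℕ) (μ : F) (x y z : Fin m → F) :
    polB j μ (x + y) z = polB j μ x z + polB j μ y z := by
  rw [polB_symm, polB_add_right, polB_symm j μ z x, polB_symm j μ z y]

lemma polB_smul_left (j : ℕ) (μ : F) (c : F) (x y : Fin m → F) :
    polB j μ (c • x) y = c * polB j μ x y := by
  rw [polB_symm, polB_smul_right, polB_symm j μ y x]

lemma polB_neg_right (j : ℕ) (μ : F) (x y : Fin m → F) :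
    polB j μ x (-y) = -polB j μ x y := by
  have := polB_smul_right j μ (-1 : F) x y
  rw [neg_one_smul] at this
  rw [this]; ring

lemma polB_sub_right (j : ℕ) (μ : F) (x y z : Fin m → F) :
    polB j μ x (y - z) = polB j μ x y - polB j μ x z := by
  rw [sub_eq_add_neg, polB_add_right, polB_neg_right]; ring

lemma polB_sub_left (j : ℕ) (μ : F) (x y z : Fin m → F) :
    polB j μ (x - y) z = polB j μ x z - polB j μ y z := by
  rw [polB_symm, polB_sub_right, polB_symm j μ z x, polB_symm j μ z y]

lemma Qf_add (j : ℕ) (μ : F) (x y : Fin m → F) :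
    Qf j μ (x + y) = Qf j μ x + Qf j μ y + polB j μ x y := by
  unfold Qf Bform polB
  have h1 : (∑ i ∈ Finset.range j,
      if h : 2 * i + 1 < m then (x + y) ⟨2 * i, by omega⟩ * (x + y) ⟨2 * i + 1, h⟩ else 0) =
      ∑ i ∈ Finset.range j,
      ((if h : 2 * i + 1 < m then x ⟨2 * i, by omega⟩ * x ⟨2 * i + 1, h⟩ else 0) +
       (if h : 2 * i + 1 < m then y ⟨2 * i, by omega⟩ * y ⟨2 * i + 1, h⟩ else 0) +
       (if h : 2 * i + 1 < m then
          x ⟨2 * i, by omega⟩ * y ⟨2 * i + 1, h⟩ + x ⟨2 * i + 1, h⟩ * y ⟨2 * i, by omega⟩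
        else 0)) := by
    refine Finset.sum_congr rfl fun i hi => ?_
    split_ifs with h
    · simp only [Pi.add_apply]; ring
    · ring
  rw [h1, Finset.sum_add_distrib, Finset.sum_add_distrib]
  split_ifs with h
  · simp only [Pi.add_apply]; ring
  · ring

lemma Qf_smul (j : ℕ) (μ : F) (c : F) (x : Fin m → F) :
    Qf j μ (c • x) = c ^ 2 * Qf j μ x := by
  unfold Qf Bform
  rw [mul_add, Finset.mul_sum]
  congr 1
  · refine Finset.sum_congr rfl fun i hi => ?_
    split_ifs with h
    · simp only [Pi.smul_apply, smul_eq_mul]; ring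
    · ring
  · split_ifs with h
    · simp only [Pi.smul_apply, smul_eq_mul]; ring
    · ring

lemma Qf_neg (j : ℕ) (μ : F) (x : Fin m → F) : Qf j μ (-x) = Qf j μ x := by
  have := Qf_smul j μ (-1 : F) x
  rw [neg_one_smul] at this
  rw [this]; ring

lemma Qf_sub (j : ℕ) (μ : F) (x y : Fin m → F) :
    Qf j μ (x - y) = Qf j μ x + Qf j μ y - polB j μ x y := by
  rw [sub_eq_add_neg, Qf_add, Qf_neg, polB_neg_right]; ring

lemma polB_self (j : ℕ) (μ : F) (x : Fin m → F) :
    polB j μ x x = 2 * Qf j μ x := by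
  unfold polB Qf Bform
  rw [mul_add, Finset.mul_sum]
  congr 1
  · refine Finset.sum_congr rfl fun i hi => ?_
    split_ifs with h
    · ring
    · ring
  · split_ifs with h
    · ring
    · ring

lemma Qf_line (j : ℕ) (μ : F) (c : F) (x y : Fin m → F) :
    Qf j μ (x + c • y) = Qf j μ x + c ^ 2 * Qf j μ y + c * polB j μ x y := by
  rw [Qf_add, Qf_smul, polB_smul_right]

lemma Lfun_add (b x y : Fin m → F) : Lfun b (x + y) = Lfun b x + Lfun b y := by
  unfold Lfun
  rw [← Finset.sum_add_distrib]
  exact Finset.sum_congr rfl fun i _ => by simp [mul_add]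

lemma Lfun_smul (b : Fin m → F) (c : F) (x : Fin m → F) :
    Lfun b (c • x) = c * Lfun b x := by
  unfold Lfun
  rw [Finset.mul_sum]
  exact Finset.sum_congr rfl fun i _ => by simp; ring

lemma Lfun_neg (b x : Fin m → F) : Lfun b (-x) = -Lfun b x := by
  have := Lfun_smul b (-1 : F) x
  rw [neg_one_smul] at this
  rw [this]; ring

lemma Lfun_sub (b x y : Fin m → F) : Lfun b (x - y) = Lfun b x - Lfun b y := by
  rw [sub_eq_add_neg, Lfun_add, Lfun_neg]; ring

lemma Lfun_line (b : Fin m → F) (c : F) (x y : Fin m → F) :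
    Lfun b (x + c • y) = Lfun b x + c * Lfun b y := by
  rw [Lfun_add, Lfun_smul]

lemma Lfun_smul_left (b : Fin m → F) (c : F) (x : Fin m → F) :
    Lfun (c • b) x = c * Lfun b x := by
  unfold Lfun
  rw [Finset.mul_sum]
  exact Finset.sum_congr rfl fun i _ => by simp; ring

lemma Lfun_ind (b : Fin m → F) (i : Fin m) (c : F) :
    Lfun b (fun k => if k = i then c else 0) = b i * c := by
  unfold Lfun
  rw [Finset.sum_eq_single i]
  · simp
  · intro j _ hj; simp [hj]
  · simp

lemma FL (b c : Fin m → F) (hb : b ≠ 0)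
    (H : ∀ x, Lfun b x = 0 → Lfun c x = 0) : ∃ t : F, c = t • b := by
  obtain ⟨i0, hi0⟩ : ∃ i, b i ≠ 0 := by
    by_contra h
    push_neg at h
    exact hb (funext fun i => h i)
  obtain ⟨u, hu⟩ : ∃ u : Fin m → F, Lfun b u = 1 :=
    ⟨fun k => if k = i0 then (b i0)⁻¹ else 0, by rw [Lfun_ind, mul_inv_cancel₀ hi0]⟩
  have key : ∀ x, Lfun c x = Lfun c u * Lfun b x := by
    intro x
    have h1 : Lfun b (x - Lfun b x • u) = 0 := by
      rw [Lfun_sub, Lfun_smul, hu]; ring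
    have h2 := H _ h1
    rw [Lfun_sub, Lfun_smul, sub_eq_zero] at h2
    rw [h2]; ring
  refine ⟨Lfun c u, funext fun i => ?_⟩
  have := key (fun k => if k = i then (1:F) else 0)
  rw [Lfun_ind, Lfun_ind, mul_one, mul_one] at this
  simpa [Pi.smul_apply, smul_eq_mul] using this

section Eval

variable {j : ℕ} (hj : 2 ≤ j) (hm : 2 * j < m)

lemma Bform_eval (x : Fin m → F)
    (hx : ∀ i : Fin m, i.1 ≠ 0 → i.1 ≠ 1 → i.1 ≠ 2 → i.1 ≠ 3 → i.1 ≠ 2 * j → x i = 0) :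
    Bform j x = x ⟨0, by omega⟩ * x ⟨1, by omega⟩ + x ⟨2, by omega⟩ * x ⟨3, by omega⟩ := by
  unfold Bform
  rw [← Finset.sum_subset (show ({0, 1} : Finset ℕ) ⊆ Finset.range j by
      intro i hi
      simp only [Finset.mem_insert, Finset.mem_singleton] at hi
      rcases hi with h | h <;> simp [h] <;> omega)
    (fun i hi hni => by
      simp only [Finset.mem_insert, Finset.mem_singleton, not_or] at hni
      rw [Finset.mem_range] at hi
      rw [dif_pos (by omega : 2 * i + 1 < m)]
      have : x ⟨2 * i, by omega⟩ = 0 := hx ⟨2 * i, by omega⟩ (by show 2*i ≠ 0; omega)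
        (by show 2*i ≠ 1; omega) (by show 2*i ≠ 2; omega) (by show 2*i ≠ 3; omega)
        (by show 2*i ≠ 2*j; omega)
      rw [this, zero_mul])]
  rw [Finset.sum_pair (by norm_num : (0:ℕ) ≠ 1)]
  rw [dif_pos (by omega : 2 * 0 + 1 < m), dif_pos (by omega : 2 * 1 + 1 < m)]

lemma polB_eval (μ : F) (x y : Fin m → F)
    (hx : ∀ i : Fin m, i.1 ≠ 0 → i.1 ≠ 1 → i.1 ≠ 2 → i.1 ≠ 3 → i.1 ≠ 2 * j → x i = 0) :
    polB j μ x y = x ⟨0, by omega⟩ * y ⟨1, by omega⟩ + x ⟨1, by omega⟩ * y ⟨0, by omega⟩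
      + x ⟨2, by omega⟩ * y ⟨3, by omega⟩ + x ⟨3, by omega⟩ * y ⟨2, by omega⟩
      + 2 * μ * x ⟨2 * j, hm⟩ * y ⟨2 * j, hm⟩ := by
  unfold polB
  rw [← Finset.sum_subset (show ({0, 1} : Finset ℕ) ⊆ Finset.range j by
      intro i hi
      simp only [Finset.mem_insert, Finset.mem_singleton] at hi
      rcases hi with h | h <;> simp [h] <;> omega)
    (fun i hi hni => by
      simp only [Finset.mem_insert, Finset.mem_singleton, not_or] at hni
      rw [Finset.mem_range] at hi
      rw [dif_pos (by omega : 2 * i + 1 < m)]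
      have h1 : x ⟨2 * i, by omega⟩ = 0 := hx ⟨2 * i, by omega⟩ (by show 2*i ≠ 0; omega)
        (by show 2*i ≠ 1; omega) (by show 2*i ≠ 2; omega) (by show 2*i ≠ 3; omega)
        (by show 2*i ≠ 2*j; omega)
      have h2 : x ⟨2 * i + 1, by omega⟩ = 0 := hx ⟨2 * i + 1, by omega⟩ (by show 2*i+1 ≠ 0; omega)
        (by show 2*i+1 ≠ 1; omega) (by show 2*i+1 ≠ 2; omega) (by show 2*i+1 ≠ 3; omega)
        (by show 2*i+1 ≠ 2*j; omega)
      rw [h1, h2, zero_mul, zero_mul, add_zero])]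
  rw [Finset.sum_pair (by norm_num : (0:ℕ) ≠ 1)]
  rw [dif_pos (by omega : 2 * 0 + 1 < m), dif_pos (by omega : 2 * 1 + 1 < m), dif_pos hm]
  simp only [show (2*0 : ℕ) = 0 from rfl, show (2*0+1 : ℕ) = 1 from rfl,
    show (2*1 : ℕ) = 2 from rfl, show (2*1+1 : ℕ) = 3 from rfl]
  ring

lemma Qf_eval (μ : F) (x : Fin m → F)
    (hx : ∀ i : Fin m, i.1 ≠ 0 → i.1 ≠ 1 → i.1 ≠ 2 → i.1 ≠ 3 → i.1 ≠ 2 * j → x i = 0) :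
    Qf j μ x = x ⟨0, by omega⟩ * x ⟨1, by omega⟩ + x ⟨2, by omega⟩ * x ⟨3, by omega⟩
      + μ * x ⟨2 * j, hm⟩ ^ 2 := by
  unfold Qf
  rw [Bform_eval hj hm x hx, dif_pos hm]

lemma Lfun_eval (b x : Fin m → F)
    (hx : ∀ i : Fin m, i.1 ≠ 0 → i.1 ≠ 1 → i.1 ≠ 2 → i.1 ≠ 3 → i.1 ≠ 2 * j → x i = 0) :
    Lfun b x = b ⟨0, by omega⟩ * x ⟨0, by omega⟩ + b ⟨1, by omega⟩ * x ⟨1, by omega⟩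
      + b ⟨2, by omega⟩ * x ⟨2, by omega⟩ + b ⟨3, by omega⟩ * x ⟨3, by omega⟩
      + b ⟨2 * j, hm⟩ * x ⟨2 * j, hm⟩ := by
  unfold Lfun
  rw [← Finset.sum_subset (Finset.subset_univ
      ({⟨0, by omega⟩, ⟨1, by omega⟩, ⟨2, by omega⟩, ⟨3, by omega⟩, ⟨2 * j, hm⟩} : Finset (Fin m)))
    (fun i _ hni => by
      simp only [Finset.mem_insert, Finset.mem_singleton, not_or, Fin.ext_iff] at hni
      rw [hx i hni.1 hni.2.1 hni.2.2.1 hni.2.2.2.1 hni.2.2.2.2, mul_zero])]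
  rw [Finset.sum_insert (by simp [Fin.ext_iff]; omega),
      Finset.sum_insert (by simp [Fin.ext_iff]; omega),
      Finset.sum_insert (by simp [Fin.ext_iff]; omega),
      Finset.sum_insert (by simp [Fin.ext_iff]; omega),
      Finset.sum_singleton]
  ring

end Eval

section Witness

variable {j : ℕ}

/-- a function supported at (at most) two coordinates -/
def two (k l : ℕ) (c d : F) : Fin m → F := fun i => if i.1 = k then c else if i.1 = l then d else 0

lemma two_apply (k l : ℕ) (c d : F) (u : ℕ) (h : u < m) :
    two k l c d ⟨u, h⟩ = if u = k then c else if u = l then d else 0 := rfl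

lemma two_eq_zero {k l : ℕ} {c d : F} {i : Fin m} (hik : i.1 ≠ k) (hil : i.1 ≠ l) :
    two k l c d i = 0 := by
  unfold two
  rw [if_neg hik, if_neg hil]

/-- a function supported at (at most) three coordinates -/
def three (k l n : ℕ) (c d e : F) : Fin m → F :=
  fun i => if i.1 = k then c else if i.1 = l then d else if i.1 = n then e else 0

lemma three_apply (k l n : ℕ) (c d e : F) (u : ℕ) (h : u < m) :
    three k l n c d e ⟨u, h⟩
      = if u = k then c else if u = l then d else if u = n then e else 0 := rfl

lemma three_eq_zero {k l n : ℕ} {c d e : F} {i : Fin m}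
    (hik : i.1 ≠ k) (hil : i.1 ≠ l) (hin : i.1 ≠ n) : three k l n c d e i = 0 := by
  unfold three
  rw [if_neg hik, if_neg hil, if_neg hin]

lemma EX (hj : 2 ≤ j) (hm : 2 * j < m) (μ a : F) (b : Fin m → F) :
    ∃ s : Fin m → F, Qf j μ s = a ∧ Lfun b s = 0 := by
  by_cases hb0 : b ⟨0, by omega⟩ = 0
  · by_cases hb1 : b ⟨1, by omega⟩ = 0
    · -- s = a·e₀ + e₁
      set s : Fin m → F := two 0 1 a 1 with hs_def
      have hsupp : ∀ i : Fin m, i.1 ≠ 0 → i.1 ≠ 1 → i.1 ≠ 2 → i.1 ≠ 3 → i.1 ≠ 2 * j → s i = 0 :=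
        fun i h0 h1 _ _ _ => two_eq_zero h0 h1
      refine ⟨s, ?_, ?_⟩
      · rw [Qf_eval hj hm μ s hsupp]
        rw [hs_def]
        rw [two_apply, two_apply, two_apply, two_apply, two_apply]
        rw [if_neg (by omega : ¬(2*j = 0)), if_neg (by omega : ¬(2*j = 1))]
        norm_num
      · rw [Lfun_eval hj hm b s hsupp]
        rw [hs_def]
        rw [two_apply, two_apply, two_apply, two_apply, two_apply]
        rw [if_neg (by omega : ¬(2*j = 0)), if_neg (by omega : ¬(2*j = 1))]
        rw [hb0, hb1]
        norm_num
    · -- slack coordinate 1 : s = a·e₂ + e₃ + c·e₁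
      set s : Fin m → F := three 2 3 1 a 1 (-(b ⟨2, by omega⟩ * a + b ⟨3, by omega⟩) / b ⟨1, by omega⟩)
        with hs_def
      have hsupp : ∀ i : Fin m, i.1 ≠ 0 → i.1 ≠ 1 → i.1 ≠ 2 → i.1 ≠ 3 → i.1 ≠ 2 * j → s i = 0 :=
        fun i _ h1 h2 h3 _ => three_eq_zero h2 h3 h1
      refine ⟨s, ?_, ?_⟩
      · rw [Qf_eval hj hm μ s hsupp]
        rw [hs_def]
        rw [three_apply, three_apply, three_apply, three_apply, three_apply]
        rw [if_neg (by omega : ¬(2*j = 2)), if_neg (by omega : ¬(2*j = 3)),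
          if_neg (by omega : ¬(2*j = 1))]
        norm_num
      · rw [Lfun_eval hj hm b s hsupp]
        rw [hs_def]
        rw [three_apply, three_apply, three_apply, three_apply, three_apply]
        rw [if_neg (by omega : ¬(2*j = 2)), if_neg (by omega : ¬(2*j = 3)),
          if_neg (by omega : ¬(2*j = 1))]
        norm_num
        field_simp
        ring
  · -- slack coordinate 0
    set s : Fin m → F := three 2 3 0 a 1 (-(b ⟨2, by omega⟩ * a + b ⟨3, by omega⟩) / b ⟨0, by omega⟩)
      with hs_def
    have hsupp : ∀ i : Fin m, i.1 ≠ 0 → i.1 ≠ 1 → i.1 ≠ 2 → i.1 ≠ 3 → i.1 ≠ 2 * j → s i = 0 :=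
      fun i h0 _ h2 h3 _ => three_eq_zero h2 h3 h0
    refine ⟨s, ?_, ?_⟩
    · rw [Qf_eval hj hm μ s hsupp]
      rw [hs_def]
      rw [three_apply, three_apply, three_apply, three_apply, three_apply]
      rw [if_neg (by omega : ¬(2*j = 2)), if_neg (by omega : ¬(2*j = 3)),
        if_neg (by omega : ¬(2*j = 0))]
      norm_num
    · rw [Lfun_eval hj hm b s hsupp]
      rw [hs_def]
      rw [three_apply, three_apply, three_apply, three_apply, three_apply]
      rw [if_neg (by omega : ¬(2*j = 2)), if_neg (by omega : ¬(2*j = 3)),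
        if_neg (by omega : ¬(2*j = 0))]
      norm_num
      field_simp
      ring

lemma D8 (hj : 2 ≤ j) (hm : 2 * j < m) (μ : F) (hμ2 : 2 * μ ≠ 0) (b : Fin m → F) :
    ∃ x1 x2 x3 y1 y2 y3 : Fin m → F,
      Lfun b x1 = 0 ∧ Lfun b x2 = 0 ∧ Lfun b x3 = 0 ∧
      Lfun b y1 = 0 ∧ Lfun b y2 = 0 ∧ Lfun b y3 = 0 ∧
      det3 (polB j μ x1 y1) (polB j μ x1 y2) (polB j μ x1 y3)
        (polB j μ x2 y1) (polB j μ x2 y2) (polB j μ x2 y3)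
        (polB j μ x3 y1) (polB j μ x3 y2) (polB j μ x3 y3) ≠ 0 := by
  have n0 : ¬(2*j = 0) := by omega
  have n1 : ¬(2*j = 1) := by omega
  have n2 : ¬(2*j = 2) := by omega
  have n3 : ¬(2*j = 3) := by omega
  have n0p : ¬(0 = 2*j) := by omega
  have n1p : ¬(1 = 2*j) := by omega
  have n2p : ¬(2 = 2*j) := by omega
  have n3p : ¬(3 = 2*j) := by omega
  by_cases hc0 : b ⟨0, by omega⟩ = 0
  · by_cases hc1 : b ⟨1, by omega⟩ = 0
    · by_cases hc2 : b ⟨2, by omega⟩ = 0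
      · by_cases hc3 : b ⟨3, by omega⟩ = 0
        · -- all of b₀..b₃ vanish
          set g0 : Fin m → F := two 0 0 (1:F) 1 with hg0
          set g1 : Fin m → F := two 1 1 (1:F) 1 with hg1
          set g2 : Fin m → F := two 2 2 (1:F) 1 with hg2
          set g3 : Fin m → F := two 3 3 (1:F) 1 with hg3
          have hgs0 : ∀ i : Fin m, i.1 ≠ 0 → i.1 ≠ 1 → i.1 ≠ 2 → i.1 ≠ 3 → i.1 ≠ 2 * j → g0 i = 0 :=
            fun i h0 h1 h2 h3 hd => two_eq_zero h0 h0
          have hgs1 : ∀ i : Fin m, i.1 ≠ 0 → i.1 ≠ 1 → i.1 ≠ 2 → i.1 ≠ 3 → i.1 ≠ 2 * j → g1 i = 0 :=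
            fun i h0 h1 h2 h3 hd => two_eq_zero h1 h1
          have hgs2 : ∀ i : Fin m, i.1 ≠ 0 → i.1 ≠ 1 → i.1 ≠ 2 → i.1 ≠ 3 → i.1 ≠ 2 * j → g2 i = 0 :=
            fun i h0 h1 h2 h3 hd => two_eq_zero h2 h2
          have hgs3 : ∀ i : Fin m, i.1 ≠ 0 → i.1 ≠ 1 → i.1 ≠ 2 → i.1 ≠ 3 → i.1 ≠ 2 * j → g3 i = 0 :=
            fun i h0 h1 h2 h3 hd => two_eq_zero h3 h3
          have GL0 : Lfun b g0 = 0 := by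
            rw [Lfun_eval hj hm b g0 hgs0, hg0]
            simp only [two_apply]
            norm_num [n0, n1, n2, n3, n0p, n1p, n2p, n3p, hc0, hc1, hc2, hc3]
            try ring
          have GL1 : Lfun b g1 = 0 := by
            rw [Lfun_eval hj hm b g1 hgs1, hg1]
            simp only [two_apply]
            norm_num [n0, n1, n2, n3, n0p, n1p, n2p, n3p, hc0, hc1, hc2, hc3]
            try ring
          have GL2 : Lfun b g2 = 0 := by
            rw [Lfun_eval hj hm b g2 hgs2, hg2]
            simp only [two_apply]
            norm_num [n0, n1, n2, n3, n0p, n1p, n2p, n3p, hc0, hc1, hc2, hc3]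
            try ring
          have GL3 : Lfun b g3 = 0 := by
            rw [Lfun_eval hj hm b g3 hgs3, hg3]
            simp only [two_apply]
            norm_num [n0, n1, n2, n3, n0p, n1p, n2p, n3p, hc0, hc1, hc2, hc3]
            try ring
          have G01 : polB j μ g0 g1 = 1 := by
            rw [polB_eval hj hm μ g0 g1 hgs0, hg0, hg1]
            simp only [two_apply]
            norm_num [n0, n1, n2, n3, n0p, n1p, n2p, n3p, hc0, hc1, hc2, hc3]
            try ring
          have G03 : polB j μ g0 g3 = 0 := by
            rw [polB_eval hj hm μ g0 g3 hgs0, hg0, hg3]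
            simp only [two_apply]
            norm_num [n0, n1, n2, n3, n0p, n1p, n2p, n3p, hc0, hc1, hc2, hc3]
            try ring
          have G00 : polB j μ g0 g0 = 0 := by
            rw [polB_eval hj hm μ g0 g0 hgs0, hg0]
            simp only [two_apply]
            norm_num [n0, n1, n2, n3, n0p, n1p, n2p, n3p, hc0, hc1, hc2, hc3]
            try ring
          have G21 : polB j μ g2 g1 = 0 := by
            rw [polB_eval hj hm μ g2 g1 hgs2, hg2, hg1]
            simp only [two_apply]
            norm_num [n0, n1, n2, n3, n0p, n1p, n2p, n3p, hc0, hc1, hc2, hc3]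
            try ring
          have G23 : polB j μ g2 g3 = 1 := by
            rw [polB_eval hj hm μ g2 g3 hgs2, hg2, hg3]
            simp only [two_apply]
            norm_num [n0, n1, n2, n3, n0p, n1p, n2p, n3p, hc0, hc1, hc2, hc3]
            try ring
          have G20 : polB j μ g2 g0 = 0 := by
            rw [polB_eval hj hm μ g2 g0 hgs2, hg2, hg0]
            simp only [two_apply]
            norm_num [n0, n1, n2, n3, n0p, n1p, n2p, n3p, hc0, hc1, hc2, hc3]
            try ring
          have G11 : polB j μ g1 g1 = 0 := by
            rw [polB_eval hj hm μ g1 g1 hgs1, hg1]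
            simp only [two_apply]
            norm_num [n0, n1, n2, n3, n0p, n1p, n2p, n3p, hc0, hc1, hc2, hc3]
            try ring
          have G13 : polB j μ g1 g3 = 0 := by
            rw [polB_eval hj hm μ g1 g3 hgs1, hg1, hg3]
            simp only [two_apply]
            norm_num [n0, n1, n2, n3, n0p, n1p, n2p, n3p, hc0, hc1, hc2, hc3]
            try ring
          have G10 : polB j μ g1 g0 = 1 := by
            rw [polB_eval hj hm μ g1 g0 hgs1, hg1, hg0]
            simp only [two_apply]
            norm_num [n0, n1, n2, n3, n0p, n1p, n2p, n3p, hc0, hc1, hc2, hc3]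
            try ring
          refine ⟨g0, g2, g1, g1, g3, g0, GL0, GL2, GL1, GL1, GL3, GL0, ?_⟩
          rw [G01, G03, G00, G21, G23, G20, G11, G13, G10]
          have hdet : det3 (1:F) 0 0 0 1 0 0 0 1 = 1 := by unfold det3; ring
          rw [hdet]
          exact one_ne_zero
        · -- slack t = 3
          set f1 : Fin m → F := two 0 3 (b ⟨3, by omega⟩) (-(b ⟨0, by omega⟩)) with hf1
          set f2 : Fin m → F := two 1 3 (b ⟨3, by omega⟩) (-(b ⟨1, by omega⟩)) with hf2
          set f3 : Fin m → F := two (2*j) 3 (b ⟨3, by omega⟩) (-(b ⟨2*j, hm⟩)) with hf3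
          have hs1 : ∀ i : Fin m, i.1 ≠ 0 → i.1 ≠ 1 → i.1 ≠ 2 → i.1 ≠ 3 → i.1 ≠ 2 * j → f1 i = 0 :=
            fun i h0 h1 h2 h3 hd => two_eq_zero h0 h3
          have hs2 : ∀ i : Fin m, i.1 ≠ 0 → i.1 ≠ 1 → i.1 ≠ 2 → i.1 ≠ 3 → i.1 ≠ 2 * j → f2 i = 0 :=
            fun i h0 h1 h2 h3 hd => two_eq_zero h1 h3
          have hs3 : ∀ i : Fin m, i.1 ≠ 0 → i.1 ≠ 1 → i.1 ≠ 2 → i.1 ≠ 3 → i.1 ≠ 2 * j → f3 i = 0 :=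
            fun i h0 h1 h2 h3 hd => two_eq_zero hd h3
          have L1 : Lfun b f1 = 0 := by
            rw [Lfun_eval hj hm b f1 hs1, hf1]
            simp only [two_apply]
            norm_num [n0, n1, n2, n3, n0p, n1p, n2p, n3p]
            try ring
          have L2 : Lfun b f2 = 0 := by
            rw [Lfun_eval hj hm b f2 hs2, hf2]
            simp only [two_apply]
            norm_num [n0, n1, n2, n3, n0p, n1p, n2p, n3p]
            try ring
          have L3 : Lfun b f3 = 0 := by
            rw [Lfun_eval hj hm b f3 hs3, hf3]
            simp only [two_apply]
            norm_num [n0, n1, n2, n3, n0p, n1p, n2p, n3p]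
            try ring
          have E11 : polB j μ f1 f1 = 0 := by
            rw [polB_eval hj hm μ f1 f1 hs1, hf1]
            simp only [two_apply]
            norm_num [n0, n1, n2, n3, n0p, n1p, n2p, n3p]
            try ring
          have E12 : polB j μ f1 f2 = b ⟨3, by omega⟩ ^ 2 := by
            rw [polB_eval hj hm μ f1 f2 hs1, hf1, hf2]
            simp only [two_apply]
            norm_num [n0, n1, n2, n3, n0p, n1p, n2p, n3p]
            try ring
          have E13 : polB j μ f1 f3 = 0 := by
            rw [polB_eval hj hm μ f1 f3 hs1, hf1, hf3]
            simp only [two_apply]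
            norm_num [n0, n1, n2, n3, n0p, n1p, n2p, n3p]
            try ring
          have E22 : polB j μ f2 f2 = 0 := by
            rw [polB_eval hj hm μ f2 f2 hs2, hf2]
            simp only [two_apply]
            norm_num [n0, n1, n2, n3, n0p, n1p, n2p, n3p]
            try ring
          have E23 : polB j μ f2 f3 = 0 := by
            rw [polB_eval hj hm μ f2 f3 hs2, hf2, hf3]
            simp only [two_apply]
            norm_num [n0, n1, n2, n3, n0p, n1p, n2p, n3p]
            try ring
          have E33 : polB j μ f3 f3 = 2 * μ * b ⟨3, by omega⟩ ^ 2 := by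
            rw [polB_eval hj hm μ f3 f3 hs3, hf3]
            simp only [two_apply]
            norm_num [n0, n1, n2, n3, n0p, n1p, n2p, n3p]
            try ring
          have E21 : polB j μ f2 f1 = b ⟨3, by omega⟩ ^ 2 := by rw [polB_symm]; exact E12
          have E31 : polB j μ f3 f1 = 0 := by rw [polB_symm]; exact E13
          have E32 : polB j μ f3 f2 = 0 := by rw [polB_symm]; exact E23
          refine ⟨f1, f2, f3, f1, f2, f3, L1, L2, L3, L1, L2, L3, ?_⟩
          rw [E11, E12, E13, E21, E22, E23, E31, E32, E33]
          have hdet : det3 0 (b ⟨3, by omega⟩ ^ 2) 0 (b ⟨3, by omega⟩ ^ 2) 0 0 0 0 (2 * μ * b ⟨3, by omega⟩ ^ 2)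
              = -(2*μ) * (b ⟨3, by omega⟩)^6 := by unfold det3; ring
          rw [hdet]
          exact mul_ne_zero (neg_ne_zero.mpr hμ2) (pow_ne_zero _ hc3)
      · -- slack t = 2
        set f1 : Fin m → F := two 0 2 (b ⟨2, by omega⟩) (-(b ⟨0, by omega⟩)) with hf1
        set f2 : Fin m → F := two 1 2 (b ⟨2, by omega⟩) (-(b ⟨1, by omega⟩)) with hf2
        set f3 : Fin m → F := two (2*j) 2 (b ⟨2, by omega⟩) (-(b ⟨2*j, hm⟩)) with hf3
        have hs1 : ∀ i : Fin m, i.1 ≠ 0 → i.1 ≠ 1 → i.1 ≠ 2 → i.1 ≠ 3 → i.1 ≠ 2 * j → f1 i = 0 :=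
          fun i h0 h1 h2 h3 hd => two_eq_zero h0 h2
        have hs2 : ∀ i : Fin m, i.1 ≠ 0 → i.1 ≠ 1 → i.1 ≠ 2 → i.1 ≠ 3 → i.1 ≠ 2 * j → f2 i = 0 :=
          fun i h0 h1 h2 h3 hd => two_eq_zero h1 h2
        have hs3 : ∀ i : Fin m, i.1 ≠ 0 → i.1 ≠ 1 → i.1 ≠ 2 → i.1 ≠ 3 → i.1 ≠ 2 * j → f3 i = 0 :=
          fun i h0 h1 h2 h3 hd => two_eq_zero hd h2
        have L1 : Lfun b f1 = 0 := by
          rw [Lfun_eval hj hm b f1 hs1, hf1]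
          simp only [two_apply]
          norm_num [n0, n1, n2, n3, n0p, n1p, n2p, n3p]
          try ring
        have L2 : Lfun b f2 = 0 := by
          rw [Lfun_eval hj hm b f2 hs2, hf2]
          simp only [two_apply]
          norm_num [n0, n1, n2, n3, n0p, n1p, n2p, n3p]
          try ring
        have L3 : Lfun b f3 = 0 := by
          rw [Lfun_eval hj hm b f3 hs3, hf3]
          simp only [two_apply]
          norm_num [n0, n1, n2, n3, n0p, n1p, n2p, n3p]
          try ring
        have E11 : polB j μ f1 f1 = 0 := by
          rw [polB_eval hj hm μ f1 f1 hs1, hf1]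
          simp only [two_apply]
          norm_num [n0, n1, n2, n3, n0p, n1p, n2p, n3p]
          try ring
        have E12 : polB j μ f1 f2 = b ⟨2, by omega⟩ ^ 2 := by
          rw [polB_eval hj hm μ f1 f2 hs1, hf1, hf2]
          simp only [two_apply]
          norm_num [n0, n1, n2, n3, n0p, n1p, n2p, n3p]
          try ring
        have E13 : polB j μ f1 f3 = 0 := by
          rw [polB_eval hj hm μ f1 f3 hs1, hf1, hf3]
          simp only [two_apply]
          norm_num [n0, n1, n2, n3, n0p, n1p, n2p, n3p]
          try ring
        have E22 : polB j μ f2 f2 = 0 := by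
          rw [polB_eval hj hm μ f2 f2 hs2, hf2]
          simp only [two_apply]
          norm_num [n0, n1, n2, n3, n0p, n1p, n2p, n3p]
          try ring
        have E23 : polB j μ f2 f3 = 0 := by
          rw [polB_eval hj hm μ f2 f3 hs2, hf2, hf3]
          simp only [two_apply]
          norm_num [n0, n1, n2, n3, n0p, n1p, n2p, n3p]
          try ring
        have E33 : polB j μ f3 f3 = 2 * μ * b ⟨2, by omega⟩ ^ 2 := by
          rw [polB_eval hj hm μ f3 f3 hs3, hf3]
          simp only [two_apply]
          norm_num [n0, n1, n2, n3, n0p, n1p, n2p, n3p]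
          try ring
        have E21 : polB j μ f2 f1 = b ⟨2, by omega⟩ ^ 2 := by rw [polB_symm]; exact E12
        have E31 : polB j μ f3 f1 = 0 := by rw [polB_symm]; exact E13
        have E32 : polB j μ f3 f2 = 0 := by rw [polB_symm]; exact E23
        refine ⟨f1, f2, f3, f1, f2, f3, L1, L2, L3, L1, L2, L3, ?_⟩
        rw [E11, E12, E13, E21, E22, E23, E31, E32, E33]
        have hdet : det3 0 (b ⟨2, by omega⟩ ^ 2) 0 (b ⟨2, by omega⟩ ^ 2) 0 0 0 0 (2 * μ * b ⟨2, by omega⟩ ^ 2)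
            = -(2*μ) * (b ⟨2, by omega⟩)^6 := by unfold det3; ring
        rw [hdet]
        exact mul_ne_zero (neg_ne_zero.mpr hμ2) (pow_ne_zero _ hc2)
    · -- slack t = 1
      set f1 : Fin m → F := two 2 1 (b ⟨1, by omega⟩) (-(b ⟨2, by omega⟩)) with hf1
      set f2 : Fin m → F := two 3 1 (b ⟨1, by omega⟩) (-(b ⟨3, by omega⟩)) with hf2
      set f3 : Fin m → F := two (2*j) 1 (b ⟨1, by omega⟩) (-(b ⟨2*j, hm⟩)) with hf3
      have hs1 : ∀ i : Fin m, i.1 ≠ 0 → i.1 ≠ 1 → i.1 ≠ 2 → i.1 ≠ 3 → i.1 ≠ 2 * j → f1 i = 0 :=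
        fun i h0 h1 h2 h3 hd => two_eq_zero h2 h1
      have hs2 : ∀ i : Fin m, i.1 ≠ 0 → i.1 ≠ 1 → i.1 ≠ 2 → i.1 ≠ 3 → i.1 ≠ 2 * j → f2 i = 0 :=
        fun i h0 h1 h2 h3 hd => two_eq_zero h3 h1
      have hs3 : ∀ i : Fin m, i.1 ≠ 0 → i.1 ≠ 1 → i.1 ≠ 2 → i.1 ≠ 3 → i.1 ≠ 2 * j → f3 i = 0 :=
        fun i h0 h1 h2 h3 hd => two_eq_zero hd h1
      have L1 : Lfun b f1 = 0 := by
        rw [Lfun_eval hj hm b f1 hs1, hf1]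
        simp only [two_apply]
        norm_num [n0, n1, n2, n3, n0p, n1p, n2p, n3p]
        try ring
      have L2 : Lfun b f2 = 0 := by
        rw [Lfun_eval hj hm b f2 hs2, hf2]
        simp only [two_apply]
        norm_num [n0, n1, n2, n3, n0p, n1p, n2p, n3p]
        try ring
      have L3 : Lfun b f3 = 0 := by
        rw [Lfun_eval hj hm b f3 hs3, hf3]
        simp only [two_apply]
        norm_num [n0, n1, n2, n3, n0p, n1p, n2p, n3p]
        try ring
      have E11 : polB j μ f1 f1 = 0 := by
        rw [polB_eval hj hm μ f1 f1 hs1, hf1]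
        simp only [two_apply]
        norm_num [n0, n1, n2, n3, n0p, n1p, n2p, n3p]
        try ring
      have E12 : polB j μ f1 f2 = b ⟨1, by omega⟩ ^ 2 := by
        rw [polB_eval hj hm μ f1 f2 hs1, hf1, hf2]
        simp only [two_apply]
        norm_num [n0, n1, n2, n3, n0p, n1p, n2p, n3p]
        try ring
      have E13 : polB j μ f1 f3 = 0 := by
        rw [polB_eval hj hm μ f1 f3 hs1, hf1, hf3]
        simp only [two_apply]
        norm_num [n0, n1, n2, n3, n0p, n1p, n2p, n3p]
        try ring
      have E22 : polB j μ f2 f2 = 0 := by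
        rw [polB_eval hj hm μ f2 f2 hs2, hf2]
        simp only [two_apply]
        norm_num [n0, n1, n2, n3, n0p, n1p, n2p, n3p]
        try ring
      have E23 : polB j μ f2 f3 = 0 := by
        rw [polB_eval hj hm μ f2 f3 hs2, hf2, hf3]
        simp only [two_apply]
        norm_num [n0, n1, n2, n3, n0p, n1p, n2p, n3p]
        try ring
      have E33 : polB j μ f3 f3 = 2 * μ * b ⟨1, by omega⟩ ^ 2 := by
        rw [polB_eval hj hm μ f3 f3 hs3, hf3]
        simp only [two_apply]
        norm_num [n0, n1, n2, n3, n0p, n1p, n2p, n3p]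
        try ring
      have E21 : polB j μ f2 f1 = b ⟨1, by omega⟩ ^ 2 := by rw [polB_symm]; exact E12
      have E31 : polB j μ f3 f1 = 0 := by rw [polB_symm]; exact E13
      have E32 : polB j μ f3 f2 = 0 := by rw [polB_symm]; exact E23
      refine ⟨f1, f2, f3, f1, f2, f3, L1, L2, L3, L1, L2, L3, ?_⟩
      rw [E11, E12, E13, E21, E22, E23, E31, E32, E33]
      have hdet : det3 0 (b ⟨1, by omega⟩ ^ 2) 0 (b ⟨1, by omega⟩ ^ 2) 0 0 0 0 (2 * μ * b ⟨1, by omega⟩ ^ 2)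
          = -(2*μ) * (b ⟨1, by omega⟩)^6 := by unfold det3; ring
      rw [hdet]
      exact mul_ne_zero (neg_ne_zero.mpr hμ2) (pow_ne_zero _ hc1)
  · -- slack t = 0
    set f1 : Fin m → F := two 2 0 (b ⟨0, by omega⟩) (-(b ⟨2, by omega⟩)) with hf1
    set f2 : Fin m → F := two 3 0 (b ⟨0, by omega⟩) (-(b ⟨3, by omega⟩)) with hf2
    set f3 : Fin m → F := two (2*j) 0 (b ⟨0, by omega⟩) (-(b ⟨2*j, hm⟩)) with hf3
    have hs1 : ∀ i : Fin m, i.1 ≠ 0 → i.1 ≠ 1 → i.1 ≠ 2 → i.1 ≠ 3 → i.1 ≠ 2 * j → f1 i = 0 :=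
      fun i h0 h1 h2 h3 hd => two_eq_zero h2 h0
    have hs2 : ∀ i : Fin m, i.1 ≠ 0 → i.1 ≠ 1 → i.1 ≠ 2 → i.1 ≠ 3 → i.1 ≠ 2 * j → f2 i = 0 :=
      fun i h0 h1 h2 h3 hd => two_eq_zero h3 h0
    have hs3 : ∀ i : Fin m, i.1 ≠ 0 → i.1 ≠ 1 → i.1 ≠ 2 → i.1 ≠ 3 → i.1 ≠ 2 * j → f3 i = 0 :=
      fun i h0 h1 h2 h3 hd => two_eq_zero hd h0
    have L1 : Lfun b f1 = 0 := by
      rw [Lfun_eval hj hm b f1 hs1, hf1]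
      simp only [two_apply]
      norm_num [n0, n1, n2, n3, n0p, n1p, n2p, n3p]
      try ring
    have L2 : Lfun b f2 = 0 := by
      rw [Lfun_eval hj hm b f2 hs2, hf2]
      simp only [two_apply]
      norm_num [n0, n1, n2, n3, n0p, n1p, n2p, n3p]
      try ring
    have L3 : Lfun b f3 = 0 := by
      rw [Lfun_eval hj hm b f3 hs3, hf3]
      simp only [two_apply]
      norm_num [n0, n1, n2, n3, n0p, n1p, n2p, n3p]
      try ring
    have E11 : polB j μ f1 f1 = 0 := by
      rw [polB_eval hj hm μ f1 f1 hs1, hf1]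
      simp only [two_apply]
      norm_num [n0, n1, n2, n3, n0p, n1p, n2p, n3p]
      try ring
    have E12 : polB j μ f1 f2 = b ⟨0, by omega⟩ ^ 2 := by
      rw [polB_eval hj hm μ f1 f2 hs1, hf1, hf2]
      simp only [two_apply]
      norm_num [n0, n1, n2, n3, n0p, n1p, n2p, n3p]
      try ring
    have E13 : polB j μ f1 f3 = 0 := by
      rw [polB_eval hj hm μ f1 f3 hs1, hf1, hf3]
      simp only [two_apply]
      norm_num [n0, n1, n2, n3, n0p, n1p, n2p, n3p]
      try ring
    have E22 : polB j μ f2 f2 = 0 := by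
      rw [polB_eval hj hm μ f2 f2 hs2, hf2]
      simp only [two_apply]
      norm_num [n0, n1, n2, n3, n0p, n1p, n2p, n3p]
      try ring
    have E23 : polB j μ f2 f3 = 0 := by
      rw [polB_eval hj hm μ f2 f3 hs2, hf2, hf3]
      simp only [two_apply]
      norm_num [n0, n1, n2, n3, n0p, n1p, n2p, n3p]
      try ring
    have E33 : polB j μ f3 f3 = 2 * μ * b ⟨0, by omega⟩ ^ 2 := by
      rw [polB_eval hj hm μ f3 f3 hs3, hf3]
      simp only [two_apply]
      norm_num [n0, n1, n2, n3, n0p, n1p, n2p, n3p]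
      try ring
    have E21 : polB j μ f2 f1 = b ⟨0, by omega⟩ ^ 2 := by rw [polB_symm]; exact E12
    have E31 : polB j μ f3 f1 = 0 := by rw [polB_symm]; exact E13
    have E32 : polB j μ f3 f2 = 0 := by rw [polB_symm]; exact E23
    refine ⟨f1, f2, f3, f1, f2, f3, L1, L2, L3, L1, L2, L3, ?_⟩
    rw [E11, E12, E13, E21, E22, E23, E31, E32, E33]
    have hdet : det3 0 (b ⟨0, by omega⟩ ^ 2) 0 (b ⟨0, by omega⟩ ^ 2) 0 0 0 0 (2 * μ * b ⟨0, by omega⟩ ^ 2)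
        = -(2*μ) * (b ⟨0, by omega⟩)^6 := by unfold det3; ring
    rw [hdet]
    exact mul_ne_zero (neg_ne_zero.mpr hμ2) (pow_ne_zero _ hc0)

end Witness

end Aux

section Main

lemma sum2 {F : Type*} [Field F] (a X P : F) (h3 : (3:F) = 0) (h2 : (2:F) ≠ 0) (ha : a ≠ 0)
    (H1 : X + P = 0 ∨ X + P = -a) (H2 : X - P = 0 ∨ X - P = -a) (hP : P ≠ 0) : X = a := by
  rcases H1 with h1 | h1 <;> rcases H2 with h2' | h2'
  · have hh : (2:F) * P = 0 := by linear_combination h1 - h2'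
    exact absurd ((mul_eq_zero.mp hh).resolve_left h2) hP
  · linear_combination -h1 - h2' + X * h3
  · linear_combination -h1 - h2' + X * h3
  · have hh : (2:F) * P = 0 := by linear_combination h1 - h2'
    exact absurd ((mul_eq_zero.mp hh).resolve_left h2) hP

lemma avoid3 {F : Type*} [Field F] [Fintype F] [DecidableEq F] (hq : 4 ≤ Fintype.card F)
    (c1 c2 c3 : F) : ∃ x : F, x ≠ c1 ∧ x ≠ c2 ∧ x ≠ c3 := by
  by_contra h
  push_neg at h
  have hsub : (Finset.univ : Finset F) ⊆ {c1, c2, c3} := by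
    intro x _
    simp only [Finset.mem_insert, Finset.mem_singleton]
    by_cases h1 : x = c1
    · exact Or.inl h1
    by_cases h2 : x = c2
    · exact Or.inr (Or.inl h2)
    exact Or.inr (Or.inr (h x h1 h2))
  have hle := Finset.card_le_card hsub
  have h3 : ({c1, c2, c3} : Finset F).card ≤ 3 := by
    calc ({c1, c2, c3} : Finset F).card ≤ ({c2, c3} : Finset F).card + 1 :=
          Finset.card_insert_le _ _
      _ ≤ (({c3} : Finset F).card + 1) + 1 := by
          gcongr
          exact Finset.card_insert_le _ _
      _ = 3 := by simp
  rw [Finset.card_univ] at hle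
  omega

end Main


theorem statement18 (p e q m r : ℕ) (F : Type*) [Field F] [Fintype F] [DecidableEq F]
    (hp : p.Prime) (hpodd : Odd p) (he : 0 < e) (hq : q = p ^ e)
    (hcard : Fintype.card F = q)
    (hrodd : Odd r) (hr5 : 5 ≤ r) (hrm : r ≤ m)
    (γ μ : F) (hγ : ¬ IsSquare γ) (hμ : μ = 1 ∨ μ = γ)
    (Q : (Fin m → F) → F)
    (hQ : ∀ x : Fin m → F, Q x = Bform ((r - 1) / 2) x + μ * x ⟨r - 1, by omega⟩ ^ 2)
    (a : F) (ha : a ≠ 0) :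
    ∀ b b' : Fin m → F, b ≠ 0 → b' ≠ 0 →
      ¬ ({x : Fin m → F | Q x = a ∧ Lfun b' x ≠ 0}
          ⊂ {x : Fin m → F | Q x = a ∧ Lfun b x ≠ 0}) := by
  intro b b' hb hb' hss
  obtain ⟨hsub, hnsub⟩ := ssubset_iff_subset_not_subset.mp hss
  -- index arithmetic
  obtain ⟨k0, hk0⟩ := hrodd
  have hj : 2 ≤ k0 := by omega
  have hm2 : 2 * k0 < m := by omega
  have hQf : ∀ x, Q x = Qf k0 μ x := by
    intro x
    rw [hQ x]
    unfold Qf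
    rw [dif_pos hm2]
    have e1 : (r - 1) / 2 = k0 := by omega
    have e2 : (⟨r - 1, by omega⟩ : Fin m) = ⟨2 * k0, by omega⟩ := Fin.ext (by show r - 1 = 2 * k0; omega)
    rw [e1, e2]
  -- basic field facts
  have hq2 : 2 ≤ q := hcard ▸ Fintype.one_lt_card
  have hqodd : Odd q := hq ▸ hpodd.pow
  have two0 : (2 : F) ≠ 0 := by
    refine Ring.two_ne_zero ?_
    intro h2
    haveI : CharP F 2 := ringChar.of_eq h2
    obtain ⟨n, -, hcn⟩ := FiniteField.card F 2
    rw [hcard] at hcn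
    obtain ⟨w, hw⟩ := hqodd
    have : 2 ∣ 2 ^ (n : ℕ) := dvd_pow_self 2 n.pos.ne'
    omega
  have hγ0 : γ ≠ 0 := fun h => hγ (h ▸ ⟨0, by ring⟩)
  have hμ0 : μ ≠ 0 := by
    rcases hμ with rfl | rfl
    · exact one_ne_zero
    · exact hγ0
  have hμ2 : 2 * μ ≠ 0 := mul_ne_zero two0 hμ0
  have ha2 : (2 : F) * a ≠ 0 := mul_ne_zero two0 ha
  -- the containment hypothesis, reformulated
  have hZK : ∀ x, Qf k0 μ x = a → Lfun b x = 0 → Lfun b' x = 0 := by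
    intro x hxa hxb
    by_contra hxb'
    have hx1 : x ∈ {x : Fin m → F | Q x = a ∧ Lfun b' x ≠ 0} := ⟨by rw [hQf]; exact hxa, hxb'⟩
    exact (hsub hx1).2 hxb
  have key : ∃ t : F, b' = t • b := by
    by_contra hni
    push_neg at hni
    obtain ⟨v0, hv0b, hv0b'⟩ : ∃ v, Lfun b v = 0 ∧ Lfun b' v ≠ 0 := by
      by_contra h
      push_neg at h
      obtain ⟨t, ht⟩ := FL b b' hb h
      exact hni t ht
    obtain ⟨s, hsQ, hsb⟩ := EX hj hm2 μ a b
    have hsb' : Lfun b' s = 0 := hZK s hsQ hsb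
    have Pss : polB k0 μ s s = 2 * a := by rw [polB_self, hsQ]
    rcases eq_or_ne q 3 with hq3 | hq3
    · -- q = 3
      have three0 : (3 : F) = 0 := by
        have hcc := FiniteField.cast_card_eq_zero F
        rw [hcard, hq3] at hcc
        exact_mod_cast hcc
      have elems : ∀ c : F, c = 0 ∨ c = 1 ∨ c = -1 := by
        intro c
        have h := FiniteField.pow_card c
        rw [hcard, hq3] at h
        have h2 : c * ((c - 1) * (c + 1)) = 0 := by linear_combination h
        rcases mul_eq_zero.mp h2 with h3 | h3
        · exact Or.inl h3
        · rcases mul_eq_zero.mp h3 with h4 | h4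
          · exact Or.inr (Or.inl (by linear_combination h4))
          · exact Or.inr (Or.inr (by linear_combination h4))
      have elemsa : ∀ c : F, c = 0 ∨ c = a ∨ c = -a := by
        intro c
        rcases elems a with h | h | h
        · exact absurd h ha
        · rcases elems c with h2 | h2 | h2
          · exact Or.inl h2
          · exact Or.inr (Or.inl (by rw [h2, h]))
          · exact Or.inr (Or.inr (by rw [h2, h]))
        · rcases elems c with h2 | h2 | h2
          · exact Or.inl h2
          · exact Or.inr (Or.inr (by rw [h2, h]; ring))
          · exact Or.inr (Or.inl (by rw [h2, h]))
      have na0 : (-a : F) ≠ 0 := neg_ne_zero.mpr ha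
      have nne : (-a : F) ≠ a := fun h => ha2 (by linear_combination -h)
      have D1 : ∀ u, Lfun b u = 0 → Lfun b' u ≠ 0 → (Qf k0 μ u = 0 ∨ Qf k0 μ u = -a) := by
        intro u h1 h2
        rcases elemsa (Qf k0 μ u) with h | h | h
        · exact Or.inl h
        · exact absurd (hZK u h h1) h2
        · exact Or.inr h
      have hv1b : Lfun b ((Lfun b' v0)⁻¹ • v0) = 0 := by rw [Lfun_smul, hv0b, mul_zero]
      have hv1b' : Lfun b' ((Lfun b' v0)⁻¹ • v0) = 1 := by
        rw [Lfun_smul]; exact inv_mul_cancel₀ hv0b'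
      obtain ⟨v, hvb, hvb', hvQ⟩ :
          ∃ v, Lfun b v = 0 ∧ Lfun b' v = 1 ∧ Qf k0 μ v = -a := by
        set v1 := (Lfun b' v0)⁻¹ • v0 with hv1
        rcases D1 v1 hv1b (by rw [hv1b']; exact one_ne_zero) with hc | hc
        · have hs1 : Lfun b (v1 + s) = 0 := by rw [Lfun_add, hv1b, hsb]; ring
          have hs2 : Lfun b' (v1 + s) = 1 := by rw [Lfun_add, hv1b', hsb']; ring
          rcases D1 (v1 + s) hs1 (by rw [hs2]; exact one_ne_zero) with hd | hd
          · have hadd := Qf_add k0 μ v1 s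
            rw [hc, hsQ, hd] at hadd
            refine ⟨v1 - s, by rw [Lfun_sub, hv1b, hsb]; ring,
              by rw [Lfun_sub, hv1b', hsb']; ring, ?_⟩
            rw [Qf_sub, hc, hsQ]
            linear_combination hadd + a * three0
          · exact ⟨v1 + s, hs1, hs2, hd⟩
        · exact ⟨v1, hv1b, hv1b', hc⟩
      have hvs : polB k0 μ v s = 0 := by
        have h1b : Lfun b (v + s) = 0 := by rw [Lfun_add, hvb, hsb]; ring
        have h1b' : Lfun b' (v + s) ≠ 0 := by rw [Lfun_add, hvb', hsb']; norm_num
        have h2b : Lfun b (v - s) = 0 := by rw [Lfun_sub, hvb, hsb]; ring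
        have h2b' : Lfun b' (v - s) ≠ 0 := by rw [Lfun_sub, hvb', hsb']; norm_num
        have hA := D1 _ h1b h1b'
        have hB := D1 _ h2b h2b'
        rw [Qf_add, hvQ, hsQ] at hA
        rw [Qf_sub, hvQ, hsQ] at hB
        rcases hA with h1 | h1 <;> rcases hB with h2 | h2
        · linear_combination h1
        · linear_combination h1
        · linear_combination -h2
        · exfalso; exact ha2 (by linear_combination h1 + h2)
      have D40 : ∀ k, Lfun b k = 0 → Lfun b' k = 0 → polB k0 μ v k ≠ 0 → Qf k0 μ k = -a := by
        intro k hkb hkb' hP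
        have h1b : Lfun b (v + k) = 0 := by rw [Lfun_add, hvb, hkb]; ring
        have h1b' : Lfun b' (v + k) ≠ 0 := by rw [Lfun_add, hvb', hkb']; norm_num
        have h2b : Lfun b (v - k) = 0 := by rw [Lfun_sub, hvb, hkb]; ring
        have h2b' : Lfun b' (v - k) ≠ 0 := by rw [Lfun_sub, hvb', hkb']; norm_num
        have hA := D1 _ h1b h1b'
        have hB := D1 _ h2b h2b'
        rw [Qf_add, hvQ] at hA
        rw [Qf_sub, hvQ] at hB
        have hA' : (Qf k0 μ k - a) + polB k0 μ v k = 0 ∨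
            (Qf k0 μ k - a) + polB k0 μ v k = -a := by
          rcases hA with h | h
          · exact Or.inl (by linear_combination h)
          · exact Or.inr (by linear_combination h)
        have hB' : (Qf k0 μ k - a) - polB k0 μ v k = 0 ∨
            (Qf k0 μ k - a) - polB k0 μ v k = -a := by
          rcases hB with h | h
          · exact Or.inl (by linear_combination h)
          · exact Or.inr (by linear_combination h)
        have hX := sum2 a _ _ three0 two0 ha hA' hB' hP
        linear_combination hX + a * three0
      have D4a : ∀ k, Lfun b k = 0 → Lfun b' k = 0 → polB k0 μ v k = 0 := by
        intro k hkb hkb'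
        by_contra hP
        have hQk := D40 k hkb hkb' hP
        have hksb : Lfun b (k + s) = 0 := by rw [Lfun_add, hkb, hsb]; ring
        have hksb' : Lfun b' (k + s) = 0 := by rw [Lfun_add, hkb', hsb']; ring
        have hksb2 : Lfun b (k - s) = 0 := by rw [Lfun_sub, hkb, hsb]; ring
        have hksb2' : Lfun b' (k - s) = 0 := by rw [Lfun_sub, hkb', hsb']; ring
        have hP1 : polB k0 μ v (k + s) ≠ 0 := by
          rw [polB_add_right, hvs, add_zero]; exact hP
        have hP2 : polB k0 μ v (k - s) ≠ 0 := by
          rw [polB_sub_right, hvs, sub_zero]; exact hP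
        have hQ1 := D40 _ hksb hksb' hP1
        have hQ2 := D40 _ hksb2 hksb2' hP2
        rw [Qf_add, hQk, hsQ] at hQ1
        rw [Qf_sub, hQk, hsQ] at hQ2
        exact ha2 (by linear_combination hQ1 + hQ2)
      have D4b : ∀ k, Lfun b k = 0 → Lfun b' k = 0 → Qf k0 μ k = 0 ∨ Qf k0 μ k = a := by
        intro k hkb hkb'
        have hPk := D4a k hkb hkb'
        have h1b : Lfun b (v + k) = 0 := by rw [Lfun_add, hvb, hkb]; ring
        have h1b' : Lfun b' (v + k) ≠ 0 := by rw [Lfun_add, hvb', hkb']; norm_num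
        have hA := D1 _ h1b h1b'
        rw [Qf_add, hvQ, hPk] at hA
        rcases hA with h | h
        · exact Or.inr (by linear_combination h)
        · exact Or.inl (by linear_combination h)
      have D5 : ∀ k k', Lfun b k = 0 → Lfun b' k = 0 → Lfun b k' = 0 → Lfun b' k' = 0 →
          Qf k0 μ k = 0 → polB k0 μ k k' = 0 := by
        intro k k' hkb hkb' hk'b hk'b' hQk
        by_contra hP
        have h1b : Lfun b (k + k') = 0 := by rw [Lfun_add, hkb, hk'b]; ring
        have h1b' : Lfun b' (k + k') = 0 := by rw [Lfun_add, hkb', hk'b']; ring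
        have h2b : Lfun b (k - k') = 0 := by rw [Lfun_sub, hkb, hk'b]; ring
        have h2b' : Lfun b' (k - k') = 0 := by rw [Lfun_sub, hkb', hk'b']; ring
        have hA := D4b _ h1b h1b'
        have hB := D4b _ h2b h2b'
        rw [Qf_add, hQk] at hA
        rw [Qf_sub, hQk] at hB
        have hA' : Qf k0 μ k' + polB k0 μ k k' = 0 ∨
            Qf k0 μ k' + polB k0 μ k k' = -(-a) := by
          rcases hA with h | h
          · exact Or.inl (by linear_combination h)
          · exact Or.inr (by linear_combination h)
        have hB' : Qf k0 μ k' - polB k0 μ k k' = 0 ∨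
            Qf k0 μ k' - polB k0 μ k k' = -(-a) := by
          rcases hB with h | h
          · exact Or.inl (by linear_combination h)
          · exact Or.inr (by linear_combination h)
        have hX := sum2 (-a) _ _ three0 two0 na0 hA' hB' hP
        rcases D4b k' hk'b hk'b' with h | h
        · rw [h] at hX; exact na0 hX.symm
        · rw [h] at hX; exact nne (by rw [← hX])
      have ROW : ∀ k, Lfun b k = 0 → Lfun b' k = 0 →
          ∃ ε : F, ∀ y, Lfun b y = 0 → Lfun b' y = 0 →
            polB k0 μ k y = ε * polB k0 μ s y := by
        intro k hkb hkb'
        rcases D4b k hkb hkb' with h0 | hA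
        · exact ⟨0, fun y hyb hyb' => by rw [D5 k y hkb hkb' hyb hyb' h0, zero_mul]⟩
        · have hksb : Lfun b (k + s) = 0 := by rw [Lfun_add, hkb, hsb]; ring
          have hksb' : Lfun b' (k + s) = 0 := by rw [Lfun_add, hkb', hsb']; ring
          have hadd := Qf_add k0 μ k s
          rw [hA, hsQ] at hadd
          rcases D4b _ hksb hksb' with h | h
          · refine ⟨-1, fun y hyb hyb' => ?_⟩
            have h5 := D5 (k + s) y hksb hksb' hyb hyb' h
            rw [polB_add_left] at h5
            linear_combination h5
          · have hPks : polB k0 μ k s = -a := by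
              rw [hadd] at h
              linear_combination h
            have hsub2 := Qf_sub k0 μ k s
            rw [hA, hsQ, hPks] at hsub2
            have hQw : Qf k0 μ (k - s) = 0 := by rw [hsub2]; linear_combination a * three0
            have hwb : Lfun b (k - s) = 0 := by rw [Lfun_sub, hkb, hsb]; ring
            have hwb' : Lfun b' (k - s) = 0 := by rw [Lfun_sub, hkb', hsb']; ring
            refine ⟨1, fun y hyb hyb' => ?_⟩
            have h5 := D5 (k - s) y hwb hwb' hyb hyb' hQw
            rw [polB_sub_left] at h5
            linear_combination h5
      obtain ⟨x1, x2, x3, y1, y2, y3, lx1, lx2, lx3, ly1, ly2, ly3, hdet⟩ := D8 hj hm2 μ hμ2 b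
      apply hdet
      have hk : ∀ x : Fin m → F, Lfun b x = 0 →
          Lfun b (x - Lfun b' x • v) = 0 ∧ Lfun b' (x - Lfun b' x • v) = 0 := by
        intro x hx
        constructor
        · rw [Lfun_sub, Lfun_smul, hx, hvb]; ring
        · rw [Lfun_sub, Lfun_smul, hvb']; ring
      have entry : ∀ (x y : Fin m → F), Lfun b x = 0 → Lfun b y = 0 → ∀ ε : F,
          (∀ y', Lfun b y' = 0 → Lfun b' y' = 0 →
            polB k0 μ (x - Lfun b' x • v) y' = ε * polB k0 μ s y') →
          polB k0 μ x y
            = ε * polB k0 μ s (y - Lfun b' y • v) + Lfun b' x * Lfun b' y * (2 * -a) := by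
        intro x y hx hy ε hε
        have hkx := hk x hx
        have hky := hk y hy
        have hPvky : polB k0 μ v (y - Lfun b' y • v) = 0 := D4a _ hky.1 hky.2
        have hPvkx : polB k0 μ v (x - Lfun b' x • v) = 0 := D4a _ hkx.1 hkx.2
        have hvv : polB k0 μ v v = 2 * -a := by rw [polB_self, hvQ]
        have hstep := hε _ hky.1 hky.2
        have hexp : polB k0 μ x y
            = polB k0 μ (x - Lfun b' x • v) (y - Lfun b' y • v)
              + Lfun b' y * polB k0 μ (x - Lfun b' x • v) v
              + Lfun b' x * polB k0 μ v (y - Lfun b' y • v)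
              + Lfun b' x * Lfun b' y * polB k0 μ v v := by
          conv_lhs => rw [← sub_add_cancel x (Lfun b' x • v), ← sub_add_cancel y (Lfun b' y • v)]
          simp only [polB_add_left, polB_add_right, polB_smul_left, polB_smul_right]
          ring
        rw [hexp, hstep, hvv, hPvky, polB_symm k0 μ _ v, hPvkx]
        ring
      obtain ⟨e1, he1⟩ := ROW _ (hk x1 lx1).1 (hk x1 lx1).2
      obtain ⟨e2, he2⟩ := ROW _ (hk x2 lx2).1 (hk x2 lx2).2
      obtain ⟨e3, he3⟩ := ROW _ (hk x3 lx3).1 (hk x3 lx3).2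
      rw [entry x1 y1 lx1 ly1 e1 he1, entry x1 y2 lx1 ly2 e1 he1,
        entry x1 y3 lx1 ly3 e1 he1, entry x2 y1 lx2 ly1 e2 he2,
        entry x2 y2 lx2 ly2 e2 he2, entry x2 y3 lx2 ly3 e2 he2,
        entry x3 y1 lx3 ly1 e3 he3, entry x3 y2 lx3 ly2 e3 he3,
        entry x3 y3 lx3 ly3 e3 he3]
      unfold det3
      ring
    · -- q ≥ 4
      have hq4 : 4 ≤ Fintype.card F := by
        obtain ⟨w, hw⟩ := hqodd
        rw [hcard]
        omega
      have dag : ∀ v, Lfun b v = 0 → Lfun b' v ≠ 0 →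
          ((Qf k0 μ v ≠ 0 → polB k0 μ s v = 0) ∧ (Qf k0 μ v = 0 → polB k0 μ s v ≠ 0)) := by
        intro v hvb hvb'
        constructor
        · intro hQv
          by_contra hP
          set t0 : F := -(polB k0 μ s v) / Qf k0 μ v with ht0_def
          have ht0 : t0 ≠ 0 := div_ne_zero (neg_ne_zero.mpr hP) hQv
          have hx : Qf k0 μ (s + t0 • v) = a := by
            rw [Qf_line, hsQ, ht0_def]
            field_simp
            ring
          have hxb : Lfun b (s + t0 • v) = 0 := by rw [Lfun_line, hsb, hvb]; ring
          have h2 := hZK _ hx hxb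
          rw [Lfun_line, hsb', zero_add] at h2
          exact hvb' ((mul_eq_zero.mp h2).resolve_left ht0)
        · intro hQv hP
          have hx : Qf k0 μ (s + v) = a := by rw [Qf_add, hsQ, hQv, hP]; ring
          have hxb : Lfun b (s + v) = 0 := by rw [Lfun_add, hsb, hvb]; ring
          have h2 := hZK _ hx hxb
          rw [Lfun_add, hsb', zero_add] at h2
          exact hvb' h2
      by_cases hQv0 : Qf k0 μ v0 = 0
      · -- isotropic case
        have hβ := (dag v0 hv0b hv0b').2 hQv0
        obtain ⟨lam, hl1, hl2, hl3⟩ := avoid3 hq4 0 (-(polB k0 μ s v0) / a)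
          (-(polB k0 μ s v0) / (2 * a))
        have hub : Lfun b (v0 + lam • s) = 0 := by rw [Lfun_line, hv0b, hsb]; ring
        have hub' : Lfun b' (v0 + lam • s) ≠ 0 := by
          rw [Lfun_line, hsb', mul_zero, add_zero]; exact hv0b'
        have hQu : Qf k0 μ (v0 + lam • s) = lam * (lam * a + polB k0 μ s v0) := by
          rw [Qf_line, hQv0, hsQ, polB_symm]
          ring
        have hQu0 : Qf k0 μ (v0 + lam • s) ≠ 0 := by
          rw [hQu]
          refine mul_ne_zero hl1 ?_
          intro hcon
          apply hl2
          rw [eq_div_iff ha]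
          linear_combination hcon
        have hPsu := (dag _ hub hub').1 hQu0
        rw [polB_add_right, polB_smul_right, Pss] at hPsu
        apply hl3
        rw [eq_div_iff ha2]
        linear_combination hPsu
      · -- anisotropic case
        have hPsv : polB k0 μ s v0 = 0 := (dag v0 hv0b hv0b').1 hQv0
        have step : ∀ lam : F, lam ≠ 0 → Qf k0 μ v0 + lam ^ 2 * a = 0 := by
          intro lam hlam
          have hub : Lfun b (v0 + lam • s) = 0 := by rw [Lfun_line, hv0b, hsb]; ring
          have hub' : Lfun b' (v0 + lam • s) ≠ 0 := by
            rw [Lfun_line, hsb', mul_zero, add_zero]; exact hv0b'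
          have hPsu : polB k0 μ s (v0 + lam • s) = lam * (2 * a) := by
            rw [polB_add_right, polB_smul_right, hPsv, Pss]; ring
          have hPsu0 : polB k0 μ s (v0 + lam • s) ≠ 0 := by
            rw [hPsu]; exact mul_ne_zero hlam ha2
          have hQu : Qf k0 μ (v0 + lam • s) = 0 := by
            by_contra hcon
            exact hPsu0 ((dag _ hub hub').1 hcon)
          rw [Qf_line, hsQ, polB_symm, hPsv] at hQu
          linear_combination hQu
        obtain ⟨lam, hl1, hl2, hl3⟩ := avoid3 hq4 0 1 (-1)
        have e1 := step 1 one_ne_zero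
        have e2 := step lam hl1
        have hfac : (lam - 1) * (lam + 1) * a = 0 := by linear_combination e2 - e1
        rcases mul_eq_zero.mp hfac with hfac2 | hfac2
        · rcases mul_eq_zero.mp hfac2 with h | h
          · exact hl2 (by linear_combination h)
          · exact hl3 (by linear_combination h)
        · exact ha hfac2
  obtain ⟨t, rfl⟩ := key
  have ht0 : t ≠ 0 := by
    rintro rfl
    rw [zero_smul] at hb'
    exact hb' rfl
  apply hnsub
  intro x hx
  refine ⟨hx.1, ?_⟩
  rw [Lfun_smul_left]
  exact mul_ne_zero ht0 hx.2
end
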